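/- arXiv:1907.06608 — 2 statements merged into one kernel-verified Lean document; each statement's English description precedes it below -/
import Mathlib

section
/- In the power series ring F[[x, y, u, v, z, w]] over a field F, let I = (x·u², y·v², x²·u − y²·v). Then x·y·u·v ∉ I, but each of the products (xyuv)·x, (xyuv)·y, (xyuv)·u, (xyuv)·v lies in I. -/
open MvPowerSeries Finsupp

private lemma key_coeff (F : Type*) [Field F] (e d : Fin 6 →₀ ℕ) (i : Fin 6)
    (h : e i < d i) (r : MvPowerSeries (Fin 6) F) :
    coeff e (r * monomial d (1:F)) = 0 := by
  rw [coeff_mul]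
  apply Finset.sum_eq_zero
  intro p hp
  rw [coeff_monomial]
  split
  · next hd =>
    exfalso
    rw [Finset.HasAntidiagonal.mem_antidiagonal] at hp
    subst hd
    have := DFunLike.congr_fun hp i
    simp [Finsupp.add_apply] at this
    omega
  · exact mul_zero _

/-- In `F[[x, y, u, v, z, w]]` with `I = (xu², yv², x²u − y²v)`, the element `xyuv` is not
in `I`, but `xyuv·x`, `xyuv·y`, `xyuv·u`, `xyuv·v` all lie in `I`. -/
theorem xyuv_not_mem_but_products_mem
    (F : Type*) [Field F] :
    let x : MvPowerSeries (Fin 6) F := X 0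
    let y : MvPowerSeries (Fin 6) F := X 1
    let u : MvPowerSeries (Fin 6) F := X 2
    let v : MvPowerSeries (Fin 6) F := X 3
    let I : Ideal (MvPowerSeries (Fin 6) F) :=
      Ideal.span {x * u ^ 2, y * v ^ 2, x ^ 2 * u - y ^ 2 * v}
    x * y * u * v ∉ I ∧
      (x * y * u * v) * x ∈ I ∧ (x * y * u * v) * y ∈ I ∧
      (x * y * u * v) * u ∈ I ∧ (x * y * u * v) * v ∈ I := by
  intro x y u v I
  have h1 : x * u ^ 2 ∈ I := Ideal.subset_span (by simp)
  have h2 : y * v ^ 2 ∈ I := Ideal.subset_span (by simp)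
  have h3 : x ^ 2 * u - y ^ 2 * v ∈ I := Ideal.subset_span (by simp)
  refine ⟨?_, ?_, ?_, ?_, ?_⟩
  · -- nonmembership
    intro hmem
    set e : Fin 6 →₀ ℕ := single 0 1 + single 1 1 + single 2 1 + single 3 1 with he
    have hexp : x * y * u * v = monomial e 1 := by
      simp only [x, y, u, v, X, monomial_mul_monomial, one_mul, he]
    -- the coefficient functional vanishes on I
    have hvan : ∀ f ∈ I, ∀ r, coeff e (r * f) = 0 := by
      intro f hf
      refine Submodule.span_induction ?_ ?_ ?_ ?_ hf
      · intro g hg r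
        simp only [Set.mem_insert_iff, Set.mem_singleton_iff] at hg
        rcases hg with rfl | rfl | rfl
        · have : x * u ^ 2 = monomial (single 0 1 + single 2 2) 1 := by
            simp only [x, y, u, v]; rw [X_pow_eq, ← pow_one (X _), X_pow_eq, monomial_mul_monomial, one_mul]
          rw [this]
          exact key_coeff F e _ 2 (by simp [he]) r
        · have : y * v ^ 2 = monomial (single 1 1 + single 3 2) 1 := by
            simp only [x, y, u, v]; rw [X_pow_eq, ← pow_one (X _), X_pow_eq, monomial_mul_monomial, one_mul]
          rw [this]
          exact key_coeff F e _ 3 (by simp [he]) r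
        · have hx : x ^ 2 * u = monomial (single 0 2 + single 2 1) 1 := by
            simp only [x, y, u, v]; rw [X_pow_eq, ← pow_one (X _), X_pow_eq, monomial_mul_monomial, one_mul]
          have hy : y ^ 2 * v = monomial (single 1 2 + single 3 1) 1 := by
            simp only [x, y, u, v]; rw [X_pow_eq, ← pow_one (X _), X_pow_eq, monomial_mul_monomial, one_mul]
          rw [mul_sub, map_sub, hx, hy,
            key_coeff F e _ 0 (by simp [he]) r,
            key_coeff F e _ 1 (by simp [he]) r, sub_zero]
      · intro r; simp
      · intro f g _ _ hf hg r
        rw [mul_add, map_add, hf r, hg r, add_zero]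
      · intro c f _ hf r
        rw [smul_eq_mul, ← mul_assoc]
        exact hf (r * c)
    have := hvan _ hmem 1
    rw [one_mul, hexp, coeff_monomial_same] at this
    exact one_ne_zero this
  · have : (x * y * u * v) * x = (y * v) * (x ^ 2 * u - y ^ 2 * v) + (y ^ 2) * (y * v ^ 2) := by
      ring
    rw [this]
    exact I.add_mem (I.mul_mem_left _ h3) (I.mul_mem_left _ h2)
  · have : (x * y * u * v) * y = -(x * u) * (x ^ 2 * u - y ^ 2 * v) + (x ^ 2) * (x * u ^ 2) := by
      ring
    rw [this]
    exact I.add_mem (I.mul_mem_left _ h3) (I.mul_mem_left _ h1)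
  · have : (x * y * u * v) * u = (y * v) * (x * u ^ 2) := by ring
    rw [this]
    exact I.mul_mem_left _ h1
  · have : (x * y * u * v) * v = (x * u) * (y * v ^ 2) := by ring
    rw [this]
    exact I.mul_mem_left _ h2
end

section
/- Let F be a field and R₀ = F[[X, Y, Z, X₁, X₂, X₃]] with maximal ideal m₀. Suppose J₀ ⊆ m₀² is an ideal generated by 3 elements that contains elements of the form X₃Y + X₃²q₁, X₁Y + X₁X₃q₂, and −X₂Y + X₂X₃q₃ for some q₁, q₂, q₃ ∈ R₀. Then J₀ = (X₃Y + X₃²q₁, X₁Y + X₁X₃q₂, −X₂Y + X₂X₃q₃); in particular J₀ ⊆ (X₃, Y), so the Krull dimension of R₀/J₀ is at least 4. -/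
open MvPowerSeries IsLocalRing Finsupp

open MvPowerSeries IsLocalRing Finsupp

section Aux
variable {F : Type*} [Field F]

lemma Finsupp.degree_add' (p q : Fin 6 →₀ ℕ) : (p + q).degree = p.degree + q.degree := by
  simp [degree_eq_weight_one, map_add]

/-- The ideal of power series of order at least `k`. -/
def lowIdeal (F : Type*) [Field F] (k : ℕ) : Ideal (MvPowerSeries (Fin 6) F) where
  carrier := {f | ∀ μ : Fin 6 →₀ ℕ, μ.degree < k → coeff μ f = 0}
  zero_mem' := by intro μ _; simp
  add_mem' := by intro a b ha hb μ hμ; simp [map_add, ha μ hμ, hb μ hμ]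
  smul_mem' := by
    intro r f hf μ hμ
    rw [smul_eq_mul, coeff_mul]
    apply Finset.sum_eq_zero
    rintro ⟨p, q⟩ hpq
    rw [Finset.HasAntidiagonal.mem_antidiagonal] at hpq
    have hq : q.degree < k := by
      have := Finsupp.degree_add' p q
      rw [hpq] at this; omega
    rw [hf q hq, mul_zero]

lemma mem_lowIdeal_iff {k : ℕ} {f : MvPowerSeries (Fin 6) F} :
    f ∈ lowIdeal F k ↔ ∀ μ : Fin 6 →₀ ℕ, μ.degree < k → coeff μ f = 0 := Iff.rfl

lemma maximalIdeal_le_lowIdeal_one :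
    maximalIdeal (MvPowerSeries (Fin 6) F) ≤ lowIdeal F 1 := by
  intro f hf μ hμ
  have h0 : μ = 0 := by
    rw [← Finsupp.degree_eq_zero_iff]; omega
  subst h0
  rw [mem_maximalIdeal, mem_nonunits_iff, isUnit_iff_constantCoeff, isUnit_iff_ne_zero,
    not_not] at hf
  simpa using hf

lemma lowIdeal_mul_le (j k : ℕ) : lowIdeal F j * lowIdeal F k ≤ lowIdeal F (j + k) := by
  rw [Ideal.mul_le]
  intro f hf g hg μ hμ
  rw [coeff_mul]
  apply Finset.sum_eq_zero
  rintro ⟨p, q⟩ hpq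
  rw [Finset.HasAntidiagonal.mem_antidiagonal] at hpq
  have hd : p.degree + q.degree < j + k := by
    have := Finsupp.degree_add' p q; rw [hpq] at this; omega
  rcases lt_or_ge p.degree j with h | h
  · rw [hf p h, zero_mul]
  · rw [hg q (by omega), mul_zero]

lemma maximalIdeal_pow_le_lowIdeal (k : ℕ) :
    maximalIdeal (MvPowerSeries (Fin 6) F) ^ k ≤ lowIdeal F k := by
  induction k with
  | zero => intro f _ μ hμ; omega
  | succ n ih =>
      rw [pow_succ]
      exact le_trans (Ideal.mul_mono ih maximalIdeal_le_lowIdeal_one) (lowIdeal_mul_le n 1)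

lemma coeff_monomial_mul_eq_zero {ν μ : Fin 6 →₀ ℕ} (h : ¬ ν ≤ μ) (a : F)
    (q : MvPowerSeries (Fin 6) F) : coeff μ (monomial ν a * q) = 0 := by
  classical
  rw [coeff_mul]
  apply Finset.sum_eq_zero
  rintro ⟨p, q'⟩ hpq
  rw [Finset.HasAntidiagonal.mem_antidiagonal] at hpq
  rw [coeff_monomial]
  split_ifs with hp
  · exact absurd (hpq ▸ (hp ▸ le_self_add : ν ≤ p + q')) h
  · rw [zero_mul]

/-- Constant-term extraction: for `g` of order ≥ 2 and `μ` of degree < 3,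
`coeff μ (r * g) = constantCoeff r * coeff μ g`. -/
lemma coeff_mul_lowIdeal_two {r g : MvPowerSeries (Fin 6) F} (hg : g ∈ lowIdeal F 2)
    {μ : Fin 6 →₀ ℕ} (hμ : μ.degree < 3) :
    coeff μ (r * g) = constantCoeff r * coeff μ g := by
  have hr : r - C (constantCoeff r) ∈ lowIdeal F 1 := by
    apply maximalIdeal_le_lowIdeal_one
    rw [mem_maximalIdeal, mem_nonunits_iff, isUnit_iff_constantCoeff]
    simp
  have h3 : (r - C (constantCoeff r)) * g ∈ lowIdeal F 3 := by
    have := lowIdeal_mul_le (F := F) 1 2 (Ideal.mul_mem_mul hr hg)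
    simpa using this
  have := h3 μ hμ
  rw [sub_mul, map_sub, sub_eq_zero] at this
  rw [this]
  simp [coeff_C_mul]

end Aux

section Off
variable {F : Type*} [Field F]

/-- Ring hom on `F[[X₀,…,X₅]]` keeping only monomials avoiding variables in `S`. -/
def offHom (F : Type*) [Field F] (S : Finset (Fin 6)) :
    MvPowerSeries (Fin 6) F →+* MvPowerSeries (Fin 6) F where
  toFun f := fun μ => if ∀ i ∈ S, μ i = 0 then coeff μ f else 0
  map_one' := by
    ext μ
    show (if ∀ i ∈ S, μ i = 0 then coeff μ 1 else 0) = coeff μ 1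
    rcases eq_or_ne μ 0 with rfl | hμ
    · simp
    · rw [coeff_one, if_neg hμ, ite_self]
  map_mul' := fun f g => by
    ext μ
    show (if ∀ i ∈ S, μ i = 0 then coeff μ (f * g) else 0) = coeff μ (_ * _)
    rw [coeff_mul]; erw [coeff_mul]
    by_cases hμ : ∀ i ∈ S, μ i = 0
    · rw [if_pos hμ]
      apply Finset.sum_congr rfl
      rintro ⟨p, q⟩ hpq
      rw [Finset.HasAntidiagonal.mem_antidiagonal] at hpq
      have hp : ∀ i ∈ S, p i = 0 := by
        intro i hi
        have := hμ i hi
        have : p i + q i = 0 := by rw [← this, ← hpq]; rfl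
        omega
      have hq : ∀ i ∈ S, q i = 0 := by
        intro i hi
        have := hμ i hi
        have : p i + q i = 0 := by rw [← this, ← hpq]; rfl
        omega
      show _ = (if ∀ i ∈ S, p i = 0 then coeff p f else 0) *
          (if ∀ i ∈ S, q i = 0 then coeff q g else 0)
      rw [if_pos hp, if_pos hq]
    · rw [if_neg hμ]
      symm
      apply Finset.sum_eq_zero
      rintro ⟨p, q⟩ hpq
      rw [Finset.HasAntidiagonal.mem_antidiagonal] at hpq
      show (if ∀ i ∈ S, p i = 0 then coeff p f else 0) *
          (if ∀ i ∈ S, q i = 0 then coeff q g else 0) = 0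
      by_cases hp : ∀ i ∈ S, p i = 0
      · by_cases hq : ∀ i ∈ S, q i = 0
        · exfalso
          apply hμ
          intro i hi
          have : μ i = p i + q i := by rw [← hpq]; rfl
          rw [this, hp i hi, hq i hi]
        · rw [if_neg hq, mul_zero]
      · rw [if_neg hp, zero_mul]
  map_zero' := by
    ext μ
    show (if ∀ i ∈ S, μ i = 0 then coeff μ 0 else 0) = coeff μ 0
    simp
  map_add' := fun f g => by
    ext μ
    show (if ∀ i ∈ S, μ i = 0 then coeff μ (f + g) else 0) = coeff μ (_ + _)
    rw [map_add]
    show _ = (if ∀ i ∈ S, μ i = 0 then coeff μ f else 0) +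
        (if ∀ i ∈ S, μ i = 0 then coeff μ g else 0)
    split_ifs with h
    · rfl
    · rw [add_zero]

lemma coeff_offHom (S : Finset (Fin 6)) (f : MvPowerSeries (Fin 6) F) (μ : Fin 6 →₀ ℕ) :
    coeff μ (offHom F S f) = if ∀ i ∈ S, μ i = 0 then coeff μ f else 0 := rfl

lemma X_mem_ker_offHom {S : Finset (Fin 6)} {i : Fin 6} (hi : i ∈ S) :
    (X i : MvPowerSeries (Fin 6) F) ∈ RingHom.ker (offHom F S) := by
  rw [RingHom.mem_ker]
  ext μ
  rw [coeff_offHom, map_zero]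
  split_ifs with h
  · rw [coeff_X]
    split_ifs with h2
    · exfalso
      have := h i hi
      rw [h2] at this
      simp at this
    · rfl
  · rfl

lemma X_not_mem_ker_offHom {S : Finset (Fin 6)} {j : Fin 6} (hj : j ∉ S) :
    (X j : MvPowerSeries (Fin 6) F) ∉ RingHom.ker (offHom F S) := by
  rw [RingHom.mem_ker]
  intro h
  have := congrArg (coeff (Finsupp.single j 1)) h
  rw [coeff_offHom, map_zero, if_pos, coeff_X, if_pos rfl] at this
  · exact one_ne_zero this
  · intro i hi
    rw [Finsupp.single_apply, if_neg]
    rintro rfl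
    exact hj hi

lemma ker_offHom_mono {S S' : Finset (Fin 6)} (h : S ⊆ S') :
    RingHom.ker (offHom F S) ≤ RingHom.ker (offHom F S') := by
  intro f hf
  rw [RingHom.mem_ker] at hf ⊢
  ext μ
  rw [coeff_offHom, map_zero]
  split_ifs with hμ
  · have := congrArg (coeff μ) hf
    rw [coeff_offHom, map_zero, if_pos (fun i hi => hμ i (h hi))] at this
    exact this
  · rfl

end Off

section MainAux
variable {F : Type*} [Field F]

lemma Finsupp.degree_single' (i : Fin 6) (n : ℕ) : (Finsupp.single i n).degree = n := by
  rcases eq_or_ne n 0 with rfl | h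
  · simp [Finsupp.degree]
  · exact Finsupp.degree_single i n

lemma not_le_of_apply_lt {p q : Fin 6 →₀ ℕ} (l : Fin 6) (h : q l < p l) : ¬ p ≤ q :=
  fun hle => absurd (Finsupp.le_def.mp hle l) (not_le.mpr h)

lemma X_mul_X_eq (i j : Fin 6) : (X i * X j : MvPowerSeries (Fin 6) F) =
    monomial (Finsupp.single i 1 + Finsupp.single j 1) 1 := by
  rw [X_def, X_def, monomial_mul_monomial, one_mul]

end MainAux

/-- In `R₀ = F[[X, Y, Z, X₁, X₂, X₃]]` with maximal ideal `m₀`, if `J₀ ⊆ m₀²` is an ideal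
generated by 3 elements containing `X₃Y + X₃²q₁`, `X₁Y + X₁X₃q₂`, `−X₂Y + X₂X₃q₃`, then
`J₀` is generated by these three elements; in particular `J₀ ⊆ (X₃, Y)` and
`dim R₀/J₀ ≥ 4`. -/
theorem ideal_eq_span_three_and_dim_ge_four
    (F : Type*) [Field F] :
    let Y : MvPowerSeries (Fin 6) F := X 1
    let X₁ : MvPowerSeries (Fin 6) F := X 3
    let X₂ : MvPowerSeries (Fin 6) F := X 4
    let X₃ : MvPowerSeries (Fin 6) F := X 5
    ∀ (q₁ q₂ q₃ : MvPowerSeries (Fin 6) F) (J₀ : Ideal (MvPowerSeries (Fin 6) F)),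
      J₀ ≤ (maximalIdeal (MvPowerSeries (Fin 6) F)) ^ 2 →
      (∃ a b c : MvPowerSeries (Fin 6) F, J₀ = Ideal.span {a, b, c}) →
      X₃ * Y + X₃ ^ 2 * q₁ ∈ J₀ →
      X₁ * Y + X₁ * X₃ * q₂ ∈ J₀ →
      -(X₂ * Y) + X₂ * X₃ * q₃ ∈ J₀ →
      J₀ = Ideal.span {X₃ * Y + X₃ ^ 2 * q₁, X₁ * Y + X₁ * X₃ * q₂,
          -(X₂ * Y) + X₂ * X₃ * q₃} ∧
        J₀ ≤ Ideal.span {X₃, Y} ∧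
        (4 : WithBot ℕ∞) ≤ ringKrullDim (MvPowerSeries (Fin 6) F ⧸ J₀) := by
  intro Y X₁ X₂ X₃ q₁ q₂ q₃ J₀ hm2 hgen h1 h2 h3
  classical
  have hY : Y = X 1 := rfl
  have hX1 : X₁ = X 3 := rfl
  have hX2 : X₂ = X 4 := rfl
  have hX3 : X₃ = X 5 := rfl
  simp only [hY, hX1, hX2, hX3] at h1 h2 h3 ⊢
  obtain ⟨a, b, c, hJ⟩ := hgen
  set g : Fin 3 → MvPowerSeries (Fin 6) F := ![a, b, c] with hg_def
  have hrange : Set.range g = {a, b, c} := by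
    rw [hg_def]
    ext x
    simp only [Matrix.range_cons, Matrix.range_empty, Set.union_empty, Set.mem_insert_iff,
      Set.mem_singleton_iff, Set.union_singleton, Set.mem_union]
    tauto
  have hspan : J₀ = Ideal.span (Set.range g) := by rw [hJ, hrange]
  set E : Fin 3 → MvPowerSeries (Fin 6) F :=
    ![X 5 * X 1 + X 5 ^ 2 * q₁, X 3 * X 1 + X 3 * X 5 * q₂, -(X 4 * X 1) + X 4 * X 5 * q₃]
    with hE_def
  set μE : Fin 3 → (Fin 6 →₀ ℕ) :=
    ![Finsupp.single 5 1 + Finsupp.single 1 1, Finsupp.single 3 1 + Finsupp.single 1 1,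
      Finsupp.single 4 1 + Finsupp.single 1 1] with hμE_def
  have hdeg : ∀ k, (μE k).degree = 2 := by
    intro k
    fin_cases k <;>
      simp [hμE_def, Finsupp.degree_add', Finsupp.degree_single']
  set dmat : Matrix (Fin 3) (Fin 3) F := !![1, 0, 0; 0, 1, 0; 0, 0, -1] with hdmat_def
  have c00 : coeff (Finsupp.single 5 1 + Finsupp.single 1 1) (X 5 * X 1 + X 5 ^ 2 * q₁ : MvPowerSeries (Fin 6) F) = 1 := by
    rw [X_mul_X_eq 5 1, X_pow_eq 5 2, map_add, coeff_monomial, coeff_monomial_mul_eq_zero (not_le_of_apply_lt 5 (by simp [Finsupp.add_apply, Finsupp.single_apply])) 1, add_zero]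
    rw [if_pos rfl]
    try norm_num
  have c01 : coeff (Finsupp.single 3 1 + Finsupp.single 1 1) (X 5 * X 1 + X 5 ^ 2 * q₁ : MvPowerSeries (Fin 6) F) = 0 := by
    rw [X_mul_X_eq 5 1, X_pow_eq 5 2, map_add, coeff_monomial, coeff_monomial_mul_eq_zero (not_le_of_apply_lt 5 (by simp [Finsupp.add_apply, Finsupp.single_apply])) 1, add_zero]
    rw [if_neg ?hne]
    case hne =>
      intro hcontra
      have := DFunLike.congr_fun hcontra (5 : Fin 6)
      simp [Finsupp.add_apply, Finsupp.single_apply] at this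
    try norm_num
  have c02 : coeff (Finsupp.single 4 1 + Finsupp.single 1 1) (X 5 * X 1 + X 5 ^ 2 * q₁ : MvPowerSeries (Fin 6) F) = 0 := by
    rw [X_mul_X_eq 5 1, X_pow_eq 5 2, map_add, coeff_monomial, coeff_monomial_mul_eq_zero (not_le_of_apply_lt 5 (by simp [Finsupp.add_apply, Finsupp.single_apply])) 1, add_zero]
    rw [if_neg ?hne]
    case hne =>
      intro hcontra
      have := DFunLike.congr_fun hcontra (5 : Fin 6)
      simp [Finsupp.add_apply, Finsupp.single_apply] at this
    try norm_num
  have c10 : coeff (Finsupp.single 5 1 + Finsupp.single 1 1) (X 3 * X 1 + X 3 * X 5 * q₂ : MvPowerSeries (Fin 6) F) = 0 := by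
    rw [X_mul_X_eq 3 1, X_mul_X_eq 3 5, map_add, coeff_monomial, coeff_monomial_mul_eq_zero (not_le_of_apply_lt 3 (by simp [Finsupp.add_apply, Finsupp.single_apply])) 1, add_zero]
    rw [if_neg ?hne]
    case hne =>
      intro hcontra
      have := DFunLike.congr_fun hcontra (5 : Fin 6)
      simp [Finsupp.add_apply, Finsupp.single_apply] at this
    try norm_num
  have c11 : coeff (Finsupp.single 3 1 + Finsupp.single 1 1) (X 3 * X 1 + X 3 * X 5 * q₂ : MvPowerSeries (Fin 6) F) = 1 := by
    rw [X_mul_X_eq 3 1, X_mul_X_eq 3 5, map_add, coeff_monomial, coeff_monomial_mul_eq_zero (not_le_of_apply_lt 5 (by simp [Finsupp.add_apply, Finsupp.single_apply])) 1, add_zero]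
    rw [if_pos rfl]
    try norm_num
  have c12 : coeff (Finsupp.single 4 1 + Finsupp.single 1 1) (X 3 * X 1 + X 3 * X 5 * q₂ : MvPowerSeries (Fin 6) F) = 0 := by
    rw [X_mul_X_eq 3 1, X_mul_X_eq 3 5, map_add, coeff_monomial, coeff_monomial_mul_eq_zero (not_le_of_apply_lt 3 (by simp [Finsupp.add_apply, Finsupp.single_apply])) 1, add_zero]
    rw [if_neg ?hne]
    case hne =>
      intro hcontra
      have := DFunLike.congr_fun hcontra (3 : Fin 6)
      simp [Finsupp.add_apply, Finsupp.single_apply] at this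
    try norm_num
  have c20 : coeff (Finsupp.single 5 1 + Finsupp.single 1 1) (-(X 4 * X 1) + X 4 * X 5 * q₃ : MvPowerSeries (Fin 6) F) = 0 := by
    rw [X_mul_X_eq 4 1, X_mul_X_eq 4 5, map_add, map_neg, coeff_monomial, coeff_monomial_mul_eq_zero (not_le_of_apply_lt 4 (by simp [Finsupp.add_apply, Finsupp.single_apply])) 1, add_zero]
    rw [if_neg ?hne]
    case hne =>
      intro hcontra
      have := DFunLike.congr_fun hcontra (5 : Fin 6)
      simp [Finsupp.add_apply, Finsupp.single_apply] at this
    try norm_num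
  have c21 : coeff (Finsupp.single 3 1 + Finsupp.single 1 1) (-(X 4 * X 1) + X 4 * X 5 * q₃ : MvPowerSeries (Fin 6) F) = 0 := by
    rw [X_mul_X_eq 4 1, X_mul_X_eq 4 5, map_add, map_neg, coeff_monomial, coeff_monomial_mul_eq_zero (not_le_of_apply_lt 4 (by simp [Finsupp.add_apply, Finsupp.single_apply])) 1, add_zero]
    rw [if_neg ?hne]
    case hne =>
      intro hcontra
      have := DFunLike.congr_fun hcontra (3 : Fin 6)
      simp [Finsupp.add_apply, Finsupp.single_apply] at this
    try norm_num
  have c22 : coeff (Finsupp.single 4 1 + Finsupp.single 1 1) (-(X 4 * X 1) + X 4 * X 5 * q₃ : MvPowerSeries (Fin 6) F) = -1 := by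
    rw [X_mul_X_eq 4 1, X_mul_X_eq 4 5, map_add, map_neg, coeff_monomial, coeff_monomial_mul_eq_zero (not_le_of_apply_lt 5 (by simp [Finsupp.add_apply, Finsupp.single_apply])) 1, add_zero]
    rw [if_pos rfl]
    try norm_num
  have hEc : ∀ i k, coeff (μE k) (E i) = dmat i k := by
    intro i k
    fin_cases i <;> fin_cases k
    · exact c00
    · exact c01
    · exact c02
    · exact c10
    · exact c11
    · exact c12
    · exact c20
    · exact c21
    · exact c22
  have hEJ : ∀ i, E i ∈ J₀ := by
    intro i
    fin_cases i
    · exact h1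
    · exact h2
    · exact h3
  have hgJ : ∀ j, g j ∈ J₀ := by
    intro j
    rw [hspan]
    exact Ideal.subset_span ⟨j, rfl⟩
  have hg2 : ∀ j, g j ∈ lowIdeal F 2 := fun j =>
    maximalIdeal_pow_le_lowIdeal 2 (hm2 (hgJ j))
  have hrep : ∀ i : Fin 3, ∃ r : Fin 3 → MvPowerSeries (Fin 6) F,
      ∑ j, r j * g j = E i := by
    intro i
    have := hEJ i
    rw [hspan, Ideal.span, Submodule.mem_span_range_iff_exists_fun] at this
    obtain ⟨r, hrr⟩ := this
    exact ⟨r, by simpa [smul_eq_mul] using hrr⟩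
  choose r hr using hrep
  set M : Matrix (Fin 3) (Fin 3) F :=
    Matrix.of fun i j => constantCoeff (r i j) with hM_def
  set A : Matrix (Fin 3) (Fin 3) F :=
    Matrix.of fun j k => coeff (μE k) (g j) with hA_def
  have hMA : M * A = dmat := by
    ext i k
    rw [Matrix.mul_apply, ← hEc i k, ← hr i, map_sum]
    apply Finset.sum_congr rfl
    intro j _
    rw [coeff_mul_lowIdeal_two (hg2 j) (by rw [hdeg k]; norm_num)]
    rfl
  have hdetd : IsUnit (M.det) := by
    have : M.det * A.det = -1 := by
      rw [← Matrix.det_mul, hMA, hdmat_def, Matrix.det_fin_three]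
      simp
    exact isUnit_of_mul_isUnit_left (this ▸ isUnit_one.neg)
  set N : Matrix (Fin 3) (Fin 3) F := M⁻¹ with hN_def
  have hNM : N * M = 1 := Matrix.nonsing_inv_mul M hdetd
  set Cc : F →+* MvPowerSeries (Fin 6) F := C with hCc_def
  set h : Fin 3 → MvPowerSeries (Fin 6) F :=
    fun j => E j - ∑ k, Cc (M j k) * g k with hh_def
  have hhmem : ∀ j, h j ∈ maximalIdeal (MvPowerSeries (Fin 6) F) * J₀ := by
    intro j
    have heq : h j = ∑ k, (r j k - Cc (M j k)) * g k := by
      rw [hh_def]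
      simp only [sub_mul, Finset.sum_sub_distrib, hr j]
    rw [heq]
    apply Ideal.sum_mem
    intro k _
    apply Ideal.mul_mem_mul _ (hgJ k)
    rw [mem_maximalIdeal, mem_nonunits_iff, isUnit_iff_constantCoeff]
    simp [hCc_def, hM_def]
  have hkey : ∀ i, g i = ∑ j, Cc (N i j) * (E j - h j) := by
    intro i
    have hEh : ∀ j, E j - h j = ∑ k, Cc (M j k) * g k := by
      intro j; rw [hh_def]; exact (sub_sub_cancel _ _)
    calc g i = ∑ k, Cc ((1 : Matrix (Fin 3) (Fin 3) F) i k) * g k := by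
          simp [Matrix.one_apply, apply_ite Cc, ite_mul]
      _ = ∑ k, Cc ((N * M) i k) * g k := by rw [hNM]
      _ = ∑ k, ∑ j, (Cc (N i j) * Cc (M j k)) * g k := by
          apply Finset.sum_congr rfl
          intro k _
          rw [Matrix.mul_apply, map_sum, Finset.sum_mul]
          apply Finset.sum_congr rfl
          intro j _
          rw [map_mul]
      _ = ∑ j, ∑ k, (Cc (N i j) * Cc (M j k)) * g k := Finset.sum_comm
      _ = ∑ j, Cc (N i j) * (E j - h j) := by
          apply Finset.sum_congr rfl
          intro j _
          rw [hEh j, Finset.mul_sum]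
          apply Finset.sum_congr rfl
          intro k _
          ring
  set target : Ideal (MvPowerSeries (Fin 6) F) :=
    Ideal.span {X 5 * X 1 + X 5 ^ 2 * q₁, X 3 * X 1 + X 3 * X 5 * q₂,
      -(X 4 * X 1) + X 4 * X 5 * q₃} with htarget_def
  have hEtarget : ∀ j, E j ∈ target := by
    intro j
    rw [htarget_def]
    fin_cases j
    · exact Ideal.subset_span (by simp [hE_def])
    · exact Ideal.subset_span (by simp [hE_def])
    · exact Ideal.subset_span (by simp [hE_def])
  have hle : J₀ ≤ target ⊔ maximalIdeal (MvPowerSeries (Fin 6) F) • J₀ := by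
    nth_rewrite 1 [hspan]
    rw [Ideal.span_le]
    rintro x ⟨i, rfl⟩
    rw [hkey i]
    apply Submodule.sum_mem
    intro j _
    apply Ideal.mul_mem_left
    apply sub_mem
    · exact Submodule.mem_sup_left (hEtarget j)
    · exact Submodule.mem_sup_right (by rw [smul_eq_mul]; exact hhmem j)
  have hfg : J₀.FG := by
    rw [hJ]
    exact Submodule.fg_span (Set.toFinite _)
  have main1 : J₀ = target := by
    refine le_antisymm
      (Submodule.le_of_le_smul_of_le_jacobson_bot hfg
        (IsLocalRing.maximalIdeal_le_jacobson ⊥) hle) ?_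
    rw [htarget_def, Ideal.span_le]
    intro x hx
    simp only [Set.mem_insert_iff, Set.mem_singleton_iff] at hx
    rcases hx with rfl | rfl | rfl
    · exact h1
    · exact h2
    · exact h3
  have main2 : J₀ ≤ Ideal.span {X 5, X 1} := by
    rw [main1, htarget_def, Ideal.span_le]
    have hX5 : (X 5 : MvPowerSeries (Fin 6) F) ∈ Ideal.span {X 5, X 1} :=
      Ideal.subset_span (by simp)
    intro x hx
    simp only [Set.mem_insert_iff, Set.mem_singleton_iff] at hx
    have hXY : (X 1 : MvPowerSeries (Fin 6) F) ∈ Ideal.span {X 5, X 1} :=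
      Ideal.subset_span (by simp)
    rcases hx with rfl | rfl | rfl
    · refine add_mem (Ideal.mul_mem_right _ _ hX5) ?_
      rw [sq, mul_assoc]
      exact Ideal.mul_mem_right _ _ hX5
    · refine add_mem (Ideal.mul_mem_left _ _ hXY) ?_
      exact Ideal.mul_mem_right _ _ (Ideal.mul_mem_left _ _ hX5)
    · refine add_mem (neg_mem (Ideal.mul_mem_left _ _ hXY)) ?_
      exact Ideal.mul_mem_right _ _ (Ideal.mul_mem_left _ _ hX5)
  refine ⟨main1, main2, ?_⟩
  -- dimension bound
  haveI : IsDomain (MvPowerSeries (Fin 6) F) := NoZeroDivisors.to_isDomain _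
  set Sfin : Fin 5 → Finset (Fin 6) :=
    ![{1, 5}, {1, 5, 3}, {1, 5, 3, 4}, {1, 5, 3, 4, 2}, {1, 5, 3, 4, 2, 0}] with hSfin_def
  have hJker : ∀ k, J₀ ≤ RingHom.ker (offHom F (Sfin k)) := by
    intro k
    refine le_trans main2 ?_
    rw [Ideal.span_le]
    intro x hx
    simp only [Set.mem_insert_iff, Set.mem_singleton_iff] at hx
    rcases hx with rfl | rfl
    · exact X_mem_ker_offHom (by fin_cases k <;> decide)
    · exact X_mem_ker_offHom (by fin_cases k <;> decide)
  set Q : Fin 5 → Ideal (MvPowerSeries (Fin 6) F ⧸ J₀) :=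
    fun k => (RingHom.ker (offHom F (Sfin k))).map (Ideal.Quotient.mk J₀) with hQ_def
  have hQprime : ∀ k, (Q k).IsPrime := by
    intro k
    haveI : (RingHom.ker (offHom F (Sfin k))).IsPrime := RingHom.ker_isPrime _
    exact Ideal.map_isPrime_of_surjective Ideal.Quotient.mk_surjective
      (by rw [Ideal.mk_ker]; exact hJker k)
  set newv : Fin 4 → Fin 6 := ![3, 4, 2, 0] with hnewv_def
  have hstep : ∀ k : Fin 4, Q k.castSucc < Q k.succ := by
    intro k
    have hsub : Sfin k.castSucc ⊆ Sfin k.succ := by fin_cases k <;> decide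
    have hin : newv k ∈ Sfin k.succ := by fin_cases k <;> decide
    have hout : newv k ∉ Sfin k.castSucc := by fin_cases k <;> decide
    refine lt_of_le_of_ne (Ideal.map_mono (ker_offHom_mono hsub)) ?_
    intro heq
    have hmem : Ideal.Quotient.mk J₀ (X (newv k)) ∈ Q k.castSucc := by
      rw [heq, hQ_def]
      exact Ideal.mem_map_of_mem _ (X_mem_ker_offHom hin)
    have hcomap : (X (newv k) : MvPowerSeries (Fin 6) F) ∈
        RingHom.ker (offHom F (Sfin k.castSucc)) := by
      have h2 : (X (newv k) : MvPowerSeries (Fin 6) F) ∈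
          Ideal.comap (Ideal.Quotient.mk J₀) (Q k.castSucc) := hmem
      rw [hQ_def, Ideal.comap_map_of_surjective _ Ideal.Quotient.mk_surjective] at h2
      have : Ideal.comap (Ideal.Quotient.mk J₀) ⊥ = J₀ := by
        rw [← RingHom.ker_eq_comap_bot, Ideal.mk_ker]
      rw [this, sup_eq_left.mpr (hJker k.castSucc)] at h2
      exact h2
    exact X_not_mem_ker_offHom hout hcomap
  set lseries : LTSeries (PrimeSpectrum (MvPowerSeries (Fin 6) F ⧸ J₀)) :=
    { length := 4
      toFun := fun k => ⟨Q k, hQprime k⟩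
      step := fun k => by
        show (⟨Q k.castSucc, hQprime _⟩ : PrimeSpectrum _) < ⟨Q k.succ, hQprime _⟩
        rw [← PrimeSpectrum.asIdeal_lt_asIdeal]
        exact hstep k } with hls_def
  have := Order.LTSeries.length_le_krullDim lseries
  rw [hls_def] at this
  have h4 : ((4 : ℕ) : WithBot ℕ∞) ≤
      Order.krullDim (PrimeSpectrum (MvPowerSeries (Fin 6) F ⧸ J₀)) := this
  rw [ringKrullDim]
  exact_mod_cast h4
end
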